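/- Let a, b, c, d be real numbers with b ≠ 0 and d ≠ 0, let a₀ : ℝ → ℝ, let U ⊆ ℝ be open, and let y : ℝ → ℝ be three times continuously differentiable on U with y′′′(x) + a₀(x)y(x) = 0 for all x ∈ U. Define φ(x̄) = (x̄ − c(1 + a·x̄))/(b(1 + a·x̄)), t(x̄) = 1 + a·x̄, and ȳ(x̄) = d·t(x̄)²·y(φ(x̄)). Then for every x̄ with t(x̄) ≠ 0 and φ(x̄) ∈ U, one has ȳ′′′(x̄) + ā₀(x̄)·ȳ(x̄) = 0, where ā₀(x̄) = a₀(φ(x̄))/(b³ t(x̄)⁶). -/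

import Mathlib

/-!
This is Bol's identity in order three. Since `φ' = 1 / (b t²)` with `t = 1 + a x̄` affine,
when `t² · (y ∘ φ)` is differentiated three times all terms in `y ∘ φ`, `y' ∘ φ` and `y'' ∘ φ`
cancel and only `(y''' ∘ φ) / (b³ t⁴)` survives. Substituting `y''' = -a₀ y` at `φ(x̄)` gives
the transformed equation.
-/

/-- The point transformation of the independent variable:
`φ(x̄) = (x̄ − c(1 + a x̄)) / (b(1 + a x̄))`. -/
noncomputable def phi (a b c : ℝ) (x : ℝ) : ℝ :=
  (x - c * (1 + a * x)) / (b * (1 + a * x))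

open Filter Topology

theorem ContDiffOn.hasDerivAt_iteratedDeriv {𝕜 F : Type*} [NontriviallyNormedField 𝕜]
    [NormedAddCommGroup F] [NormedSpace 𝕜 F] {f : 𝕜 → F} {s : Set 𝕜} {n : WithTop ℕ∞} {k : ℕ}
    {x : 𝕜} (hf : ContDiffOn 𝕜 n f s) (hs : IsOpen s) (hk : (k : WithTop ℕ∞) < n) (hx : x ∈ s) :
    HasDerivAt (iteratedDeriv k f) (iteratedDeriv (k + 1) f x) x := by
  have hwithin : DifferentiableAt 𝕜 (iteratedDerivWithin k f s) x :=
    (hf.differentiableOn_iteratedDerivWithin hk hs.uniqueDiffOn).differentiableAt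
      (hs.mem_nhds hx)
  have heq : iteratedDerivWithin k f s =ᶠ[𝓝 x] iteratedDeriv k f :=
    eventually_of_mem (hs.mem_nhds hx) (iteratedDerivWithin_of_isOpen hs)
  rw [iteratedDeriv_succ]
  exact (hwithin.congr_of_eventuallyEq heq.symm).hasDerivAt

theorem iteratedDeriv_three_eq_of_hasDerivAt {𝕜 F : Type*} [NontriviallyNormedField 𝕜]
    [NormedAddCommGroup F] [NormedSpace 𝕜 F] {f f₁ f₂ : 𝕜 → F} {x : 𝕜} {v : F}
    (h₁ : ∀ᶠ s in 𝓝 x, HasDerivAt f (f₁ s) s) (h₂ : ∀ᶠ s in 𝓝 x, HasDerivAt f₁ (f₂ s) s)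
    (h₃ : HasDerivAt f₂ v x) : iteratedDeriv 3 f x = v := by
  have e₁ : deriv f =ᶠ[𝓝 x] f₁ := h₁.mono fun s hs => hs.deriv
  have e₂ : deriv (deriv f) =ᶠ[𝓝 x] f₂ := e₁.deriv.trans (h₂.mono fun s hs => hs.deriv)
  rw [iteratedDeriv_eq_iterate]
  exact (e₂.deriv_eq).trans h₃.deriv

section Mobius

variable {a b c : ℝ}

theorem hasDerivAt_one_add_mul (a s : ℝ) : HasDerivAt (fun x => 1 + a * x) a s := by
  simpa using ((hasDerivAt_id s).const_mul a).const_add 1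

theorem hasDerivAt_phi {s : ℝ} (ht : 1 + a * s ≠ 0) :
    HasDerivAt (phi a b c) (1 / (b * (1 + a * s) ^ 2)) s := by
  -- Dividing by `b` last leaves `1 + a * x` as the only denominator of the quotient rule.
  have hphi : phi a b c = fun x => (x - c * (1 + a * x)) / (1 + a * x) / b :=
    funext fun x => div_mul_eq_div_div_swap _ _ _
  have hnum : HasDerivAt (fun x => x - c * (1 + a * x)) (1 - c * a) s :=
    (hasDerivAt_id s).sub ((hasDerivAt_one_add_mul a s).const_mul c)
  rw [hphi]
  refine ((hnum.div (hasDerivAt_one_add_mul a s) ht).div_const b).congr_deriv ?_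
  field_simp
  ring

theorem HasDerivAt.mul_comp_phi {w z : ℝ → ℝ} {w' z' s : ℝ} (hw : HasDerivAt w w' s)
    (hz : HasDerivAt z z' (phi a b c s)) (ht : 1 + a * s ≠ 0) :
    HasDerivAt (fun x => w x * z (phi a b c x))
      (w' * z (phi a b c s) + w s * z' / (b * (1 + a * s) ^ 2)) s := by
  refine (hw.mul (hz.comp s (hasDerivAt_phi ht))).congr_deriv ?_
  rw [Function.comp_apply]
  ring

theorem isOpen_setOf_phi_mem {U : Set ℝ} (hU : IsOpen U) :
    IsOpen {s | 1 + a * s ≠ 0 ∧ phi a b c s ∈ U} := by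
  have hcont : ContinuousOn (phi a b c) {s | 1 + a * s ≠ 0} := fun s hs =>
    (hasDerivAt_phi hs).continuousAt.continuousWithinAt
  exact hcont.isOpen_inter_preimage
    (isOpen_ne_fun (by fun_prop) continuous_const) hU

theorem iteratedDeriv_three_sq_mul_comp_phi {y : ℝ → ℝ} {U : Set ℝ} {x : ℝ} (hU : IsOpen U)
    (hy : ContDiffOn ℝ 3 y U) (ht : 1 + a * x ≠ 0) (hx : phi a b c x ∈ U) :
    iteratedDeriv 3 (fun s => (1 + a * s) ^ 2 * y (phi a b c s)) x
      = iteratedDeriv 3 y (phi a b c x) / (b ^ 3 * (1 + a * x) ^ 4) := by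
  have hY : ∀ k < 3, ∀ s ∈ U, HasDerivAt (iteratedDeriv k y) (iteratedDeriv (k + 1) y s) s :=
    fun k hk s hs => hy.hasDerivAt_iteratedDeriv hU (by exact_mod_cast hk) hs
  have hY₀ : ∀ s ∈ U, HasDerivAt y (iteratedDeriv 1 y s) s := by simpa using hY 0 (by norm_num)
  have hV : ∀ᶠ s in 𝓝 x, 1 + a * s ≠ 0 ∧ phi a b c s ∈ U :=
    (isOpen_setOf_phi_mem hU).mem_nhds ⟨ht, hx⟩
  have hlin := hasDerivAt_one_add_mul a
  refine iteratedDeriv_three_eq_of_hasDerivAt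
    (f₁ := fun s => 2 * a * (1 + a * s) * y (phi a b c s) + b⁻¹ * iteratedDeriv 1 y (phi a b c s))
    (f₂ := fun s => 2 * a ^ 2 * y (phi a b c s)
      + 2 * a * b⁻¹ * (1 + a * s)⁻¹ * iteratedDeriv 1 y (phi a b c s)
      + b⁻¹ ^ 2 * ((1 + a * s) ^ 2)⁻¹ * iteratedDeriv 2 y (phi a b c s)) ?_ ?_ ?_
  -- `b` may vanish, so `b⁻¹` is kept as an opaque scalar and only powers of `1 + a * s`
  -- are cleared.
  · filter_upwards [hV] with s ⟨hts, hs⟩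
    refine (((hlin s).fun_pow 2).mul_comp_phi (hY₀ _ hs) hts).congr_deriv ?_
    simp only [div_eq_mul_inv, mul_inv, ← inv_pow]
    generalize b⁻¹ = β
    field_simp
    ring
  · filter_upwards [hV] with s ⟨hts, hs⟩
    have h₀ := ((hlin s).const_mul (2 * a)).mul_comp_phi (hY₀ _ hs) hts
    have h₁ := (hasDerivAt_const s b⁻¹).mul_comp_phi (hY 1 (by norm_num) _ hs) hts
    refine (h₀.add h₁).congr_deriv ?_
    simp only [div_eq_mul_inv, mul_inv, ← inv_pow]
    generalize b⁻¹ = β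
    field_simp
    ring
  · have h₀ := (hasDerivAt_const x (2 * a ^ 2)).mul_comp_phi (hY₀ _ hx) ht
    have h₁ := (((hlin x).inv ht).const_mul (2 * a * b⁻¹)).mul_comp_phi
      (hY 1 (by norm_num) _ hx) ht
    have h₂ := ((((hlin x).pow 2).inv (pow_ne_zero 2 ht)).const_mul (b⁻¹ ^ 2)).mul_comp_phi
      (hY 2 (by norm_num) _ hx) ht
    refine ((h₀.add h₁).add h₂).congr_deriv ?_
    simp only [Pi.pow_apply, Pi.inv_apply, div_eq_mul_inv, mul_inv, ← inv_pow]
    generalize b⁻¹ = β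
    field_simp
    ring

end Mobius

theorem stmt_3_general (a b c d : ℝ)
    (a0 : ℝ → ℝ) (U : Set ℝ) (hU : IsOpen U) (y : ℝ → ℝ)
    (hy : ContDiffOn ℝ 3 y U)
    (hode : ∀ x ∈ U, iteratedDeriv 3 y x + a0 x * y x = 0)
    (xb : ℝ) (ht : 1 + a * xb ≠ 0) (hφ : phi a b c xb ∈ U) :
    iteratedDeriv 3 (fun s => d * (1 + a * s) ^ 2 * y (phi a b c s)) xb
      + (a0 (phi a b c xb) / (b ^ 3 * (1 + a * xb) ^ 6))
          * (d * (1 + a * xb) ^ 2 * y (phi a b c xb)) = 0 := by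
  have hbol := iteratedDeriv_three_sq_mul_comp_phi hU ((contDiffOn_const (c := d)).mul hy) ht hφ
  rw [iteratedDeriv_const_mul d (hy.contDiffAt (hU.mem_nhds hφ))] at hbol
  have hy₃ : iteratedDeriv 3 y (phi a b c xb) = -(a0 (phi a b c xb) * y (phi a b c xb)) :=
    eq_neg_of_add_eq_zero_left (hode _ hφ)
  have hfun : (fun s => d * (1 + a * s) ^ 2 * y (phi a b c s))
      = fun s => (1 + a * s) ^ 2 * (d * y (phi a b c s)) := funext fun s => by ring
  rw [hfun, hbol, hy₃]
  field_simp
  ring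

/-- the structure invariance transformation for `y′′′ + a₀ y = 0`:
if `y′′′ + a₀ y = 0` on `U`, then `ȳ(x̄) = d (1+a x̄)² y(φ(x̄))` satisfies
`ȳ′′′ + ā₀ ȳ = 0` with `ā₀(x̄) = a₀(φ(x̄))/(b³ (1+a x̄)⁶)`. -/
theorem stmt_3 (a b c d : ℝ) (hb : b ≠ 0) (hd : d ≠ 0)
    (a0 : ℝ → ℝ) (U : Set ℝ) (hU : IsOpen U) (y : ℝ → ℝ)
    (hy : ContDiffOn ℝ 3 y U)
    (hode : ∀ x ∈ U, iteratedDeriv 3 y x + a0 x * y x = 0)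
    (xb : ℝ) (ht : 1 + a * xb ≠ 0) (hφ : phi a b c xb ∈ U) :
    iteratedDeriv 3 (fun s => d * (1 + a * s) ^ 2 * y (phi a b c s)) xb
      + (a0 (phi a b c xb) / (b ^ 3 * (1 + a * xb) ^ 6))
          * (d * (1 + a * xb) ^ 2 * y (phi a b c xb)) = 0 :=
  stmt_3_general a b c d a0 U hU y hy hode xb ht hφ
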